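/- For every tournament T on n vertices, (n − 3) · c_3(T) = 2·r_4(T) + w_4(T) + l_4(T), where c_3(T) is the number of 3-element subsets of V(T) inducing a cyclic triangle, and r_4(T), w_4(T), l_4(T) are the numbers of 4-element subsets of V(T) whose induced subtournaments are isomorphic to R₄, W₄, L₄ respectively. -/

import Mathlib

/-- A tournament on `n` vertices: an irreflexive relation such that for every
pair of distinct vertices exactly one direction holds. -/
structure Tournament (n : ℕ) where
  rel : Fin n → Fin n → Bool
  irrefl : ∀ v, rel v v = false
  total : ∀ u v, u ≠ v → rel u v = !rel v u

/-- The transitive tournament `Tr_k`. -/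
def Tr (k : ℕ) : Tournament k where
  rel i j := decide (i < j)
  irrefl v := by simp
  total u v h := by
    rcases lt_or_gt_of_ne h with h' | h'
    · simp [h', lt_asymm h']
    · simp [h', lt_asymm h']

/-- The cyclic triangle. -/
def C3 : Tournament 3 where
  rel := ![![false, true, false], ![false, false, true], ![true, false, false]]
  irrefl := by decide
  total := by decide

/-- `W₄`: the non-transitive tournament on 4 vertices with a "winner". -/
def W4 : Tournament 4 where
  rel := ![![false, true, true, true], ![false, false, true, false],
           ![false, false, false, true], ![false, true, false, false]]
  irrefl := by decide
  total := by decide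

/-- `L₄`: the non-transitive tournament on 4 vertices with a "loser". -/
def L4 : Tournament 4 where
  rel := ![![false, true, false, true], ![false, false, true, true],
           ![true, false, false, true], ![false, false, false, false]]
  irrefl := by decide
  total := by decide

/-- `R₄`: the tournament on 4 vertices with out-degree sequence (1,1,2,2). -/
def R4 : Tournament 4 where
  rel := ![![false, true, true, false], ![false, false, true, true],
           ![false, false, false, true], ![true, false, false, false]]
  irrefl := by decide
  total := by decide

/-- Two tournaments on the same number of vertices are isomorphic if some
permutation of the vertices carries one arc relation to the other. -/
def Isomorphic {k : ℕ} (S T : Tournament k) : Prop :=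
  ∃ e : Equiv.Perm (Fin k), ∀ i j, S.rel i j = T.rel (e i) (e j)

/-- The subtournament of `T` induced on the subset `A` is isomorphic to `S`. -/
def IsoOn {k n : ℕ} (S : Tournament k) (T : Tournament n) (A : Finset (Fin n)) : Prop :=
  ∃ f : Fin k → Fin n, Function.Injective f ∧ Finset.univ.image f = A ∧
    ∀ i j, S.rel i j = T.rel (f i) (f j)

open scoped Classical in
/-- The number of `k`-element subsets of the vertex set of `T` whose induced
subtournament is isomorphic to `S` (where `S` has `k` vertices). -/
noncomputable def copyCount {k n : ℕ} (S : Tournament k) (T : Tournament n) : ℕ :=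
  ((Finset.powersetCard k (Finset.univ : Finset (Fin n))).filter (IsoOn S T)).card

/-- The (unlabelled) density `p(S, T)`. -/
noncomputable def density {k n : ℕ} (S : Tournament k) (T : Tournament n) : ℝ :=
  (copyCount S T : ℝ) / (n.choose k : ℝ)

/-- The number of automorphisms of a tournament. -/
def autCount {k : ℕ} (S : Tournament k) : ℕ :=
  (Finset.univ.filter
    (fun e : Equiv.Perm (Fin k) => ∀ i j, S.rel i j = S.rel (e i) (e j))).card

/-- A sequence of tournaments with growing vertex sets is quasi-random if every
fixed tournament `S` on `k` vertices appears with density tending to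
`k! / (|Aut S| * 2^(k(k-1)/2))`. -/
def QuasiRandom {nn : ℕ → ℕ} (T : ∀ j, Tournament (nn j)) : Prop :=
  ∀ (k : ℕ) (S : Tournament k),
    Filter.Tendsto (fun j => density S (T j)) Filter.atTop
      (nhds ((k.factorial : ℝ) / ((autCount S : ℝ) * 2 ^ (k * (k - 1) / 2))))

/-- `D(u,v) = #{w : u→w ∧ w→v}`. -/
def Dcount {n : ℕ} (T : Tournament n) (u v : Fin n) : ℕ :=
  (Finset.univ.filter (fun w => T.rel u w ∧ T.rel w v)).card

/-- `C(u,v) = #{w : v→w ∧ w→u}`. -/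
def Ccount {n : ℕ} (T : Tournament n) (u v : Fin n) : ℕ :=
  (Finset.univ.filter (fun w => T.rel v w ∧ T.rel w u)).card

/-- `I(u,v) = #{w : w→u ∧ w→v}`. -/
def Icount {n : ℕ} (T : Tournament n) (u v : Fin n) : ℕ :=
  (Finset.univ.filter (fun w => T.rel w u ∧ T.rel w v)).card

/-- `O(u,v) = #{w : u→w ∧ v→w}`. -/
def Ocount {n : ℕ} (T : Tournament n) (u v : Fin n) : ℕ :=
  (Finset.univ.filter (fun w => T.rel u w ∧ T.rel v w)).card

/-- The subset `A` induces a transitive subtournament of `T`. -/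
def IsTransOn {n : ℕ} (T : Tournament n) (A : Finset (Fin n)) : Prop :=
  ∀ u ∈ A, ∀ v ∈ A, ∀ w ∈ A, T.rel u v → T.rel v w → T.rel u w

open scoped Classical in
/-- `tr_m(T)`: the number of `m`-element subsets of the vertex set of `T`
inducing a transitive subtournament. -/
noncomputable def trCount (m : ℕ) {n : ℕ} (T : Tournament n) : ℕ :=
  ((Finset.powersetCard m (Finset.univ : Finset (Fin n))).filter (IsTransOn T)).card

/-- The subtournament of `T` induced on a subset `A` of its vertices. -/
noncomputable def induce {n : ℕ} (T : Tournament n) (A : Finset (Fin n)) :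
    Tournament A.card where
  rel i j := T.rel (A.orderIsoOfFin rfl i) (A.orderIsoOfFin rfl j)
  irrefl i := T.irrefl _
  total i j h := T.total _ _ (fun hc => h ((A.orderIsoOfFin rfl).injective (Subtype.ext hc)))

/-- The out-neighbourhood `N⁺(u)` of a vertex. -/
def outSet {n : ℕ} (T : Tournament n) (u : Fin n) : Finset (Fin n) :=
  Finset.univ.filter (fun w => T.rel u w)

/-- The out-degree of a vertex. -/
def outDeg {n : ℕ} (T : Tournament n) (v : Fin n) : ℕ :=
  (Finset.univ.filter (fun w => T.rel v w)).card

/-- The multiset of out-degrees of a tournament. -/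
def outDegs {n : ℕ} (T : Tournament n) : Multiset ℕ :=
  Finset.univ.val.map (outDeg T)

/-- The arc relation of `T` is transitive. -/
def IsTransitiveT {k : ℕ} (S : Tournament k) : Prop :=
  ∀ u v w, S.rel u v → S.rel v w → S.rel u w


/-!
Double counting the pairs (A, B) with A a cyclic triangle and B a 4-set containing it: every
cyclic triangle lies in exactly n - 3 four-element sets, while a four-element set contains 2, 1, 1
or 0 cyclic triangles according as it induces R₄, W₄, L₄ or a transitive tournament. The latter
is a finite check over the 2⁶ tournaments on Fin 4, transported to an arbitrary 4-set along its
order embedding.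
-/

open Finset

theorem Finset.sum_card_filter_powersetCard {α : Type*} [Fintype α] [DecidableEq α]
    (P : Finset α → Prop) [DecidablePred P] {m l : ℕ} (hml : m ≤ l) :
    ∑ B ∈ powersetCard l univ, #((B.powersetCard m).filter P) =
      (Fintype.card α - m).choose (l - m) * #((powersetCard m univ).filter P) :=
  calc ∑ B ∈ powersetCard l univ, #((B.powersetCard m).filter P)
      = ∑ B ∈ powersetCard l univ, #(((powersetCard m univ).filter P).bipartiteBelow (· ⊆ ·) B) := by
        refine sum_congr rfl fun B _ => congrArg card ?_
        ext A
        simp only [mem_bipartiteBelow, mem_filter, mem_powersetCard, subset_univ, true_and]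
        tauto
    _ = ∑ A ∈ (powersetCard m univ).filter P, #((powersetCard l univ).bipartiteAbove (· ⊆ ·) A) :=
        (sum_card_bipartiteAbove_eq_sum_card_bipartiteBelow _).symm
    _ = ∑ A ∈ (powersetCard m univ).filter P, (Fintype.card α - m).choose (l - m) := by
        refine sum_congr rfl fun A hA => ?_
        have hAm : #A = m := (mem_powersetCard.mp (mem_filter.mp hA).1).2
        rw [bipartiteAbove, card_filter_powersetCard_subset A univ l (subset_univ A) (hAm ▸ hml),
          card_univ, hAm]
    _ = _ := by rw [sum_const, smul_eq_mul, mul_comm]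

namespace Tournament

variable {k m n : ℕ}

instance (S : Tournament k) (T : Tournament n) (A : Finset (Fin n)) :
    Decidable (IsoOn S T A) := by
  unfold IsoOn; infer_instance

theorem copyCount_eq_card_filter (S : Tournament k) (T : Tournament n) :
    copyCount S T = #((powersetCard k univ).filter (IsoOn S T)) := by
  unfold copyCount; congr

def comap (T : Tournament n) (e : Fin k ↪ Fin n) : Tournament k where
  rel i j := T.rel (e i) (e j)
  irrefl i := T.irrefl (e i)
  total i j h := T.total (e i) (e j) (e.injective.ne h)

theorem isoOn_map_iff (S : Tournament m) (T : Tournament n) (e : Fin k ↪ Fin n)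
    (A : Finset (Fin k)) : IsoOn S T (A.map e) ↔ IsoOn S (T.comap e) A := by
  constructor
  · rintro ⟨f, hf, himage, hrel⟩
    have hrange (i : Fin m) : ∃ a, e a = f i := by
      obtain ⟨a, -, ha⟩ := mem_map.mp (himage ▸ mem_image_of_mem f (mem_univ i))
      exact ⟨a, ha⟩
    choose g hg using hrange
    obtain rfl : f = e ∘ g := funext fun i => (hg i).symm
    refine ⟨g, hf.of_comp, map_injective e ?_, hrel⟩
    rw [← himage, map_eq_image, image_image]
  · rintro ⟨g, hg, rfl, hrel⟩
    exact ⟨e ∘ g, e.injective.comp hg, by rw [map_eq_image, image_image], hrel⟩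

theorem card_filter_isoOn_powersetCard (S : Tournament m) (T : Tournament n)
    (B : Finset (Fin n)) (hB : #B = k) :
    #((B.powersetCard m).filter (IsoOn S T)) =
      copyCount S (T.comap (B.orderEmbOfFin hB).toEmbedding) := by
  conv_lhs => rw [← map_orderEmbOfFin_univ B hB]
  rw [powersetCard_map, filter_map, card_map, copyCount_eq_card_filter]
  exact congrArg card (filter_congr fun A _ => isoOn_map_iff S T _ A)

def ofUpper (a b c d e f : Bool) : Tournament 4 where
  rel := ![![false, a, b, c], ![!a, false, d, e], ![!b, !d, false, f], ![!c, !e, !f, false]]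
  irrefl := by revert a b c d e f; decide
  total := by revert a b c d e f; decide

theorem eq_ofUpper (U : Tournament 4) :
    U = ofUpper (U.rel 0 1) (U.rel 0 2) (U.rel 0 3) (U.rel 1 2) (U.rel 1 3) (U.rel 2 3) := by
  obtain ⟨rel, irrefl, total⟩ := U
  simp only [ofUpper, mk.injEq]
  funext i j
  fin_cases i <;> fin_cases j <;> simp [irrefl] <;> exact total _ _ (by decide)

theorem copyCount_C3_on_four_vertices (U : Tournament 4) :
    copyCount C3 U = 2 * copyCount R4 U + copyCount W4 U + copyCount L4 U := by
  rw [eq_ofUpper U]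
  simp only [copyCount_eq_card_filter]
  generalize U.rel 0 1 = a, U.rel 0 2 = b, U.rel 0 3 = c, U.rel 1 2 = d, U.rel 1 3 = e,
    U.rel 2 3 = f
  revert a b c d e f
  decide +kernel

theorem card_filter_isoOn_C3_of_card_eq_four (T : Tournament n) {B : Finset (Fin n)}
    (hB : #B = 4) :
    #((B.powersetCard 3).filter (IsoOn C3 T)) =
      2 * #((B.powersetCard 4).filter (IsoOn R4 T)) + #((B.powersetCard 4).filter (IsoOn W4 T)) +
        #((B.powersetCard 4).filter (IsoOn L4 T)) := by
  simp only [card_filter_isoOn_powersetCard _ T B hB]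
  exact copyCount_C3_on_four_vertices _

end Tournament

/-- `(n-3) · c₃(T) = 2·r₄(T) + w₄(T) + l₄(T)`. -/
theorem c3_counting_identity (n : ℕ) (T : Tournament n) :
    (n - 3) * copyCount C3 T =
      2 * copyCount R4 T + copyCount W4 T + copyCount L4 T := by
  have hsum := sum_congr (s₁ := powersetCard 4 univ) rfl fun B hB =>
    Tournament.card_filter_isoOn_C3_of_card_eq_four T (mem_powersetCard.mp hB).2
  simp only [sum_add_distrib, ← mul_sum, sum_card_filter_powersetCard _ (by norm_num : 3 ≤ 4),
    sum_card_filter_powersetCard _ le_rfl] at hsum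
  simpa [Tournament.copyCount_eq_card_filter] using hsum
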